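/- For all real numbers a and b, |σ(b) − σ(a)| ≤ σ̇(a)·|b − a| + (1/4)·(b − a)², where σ denotes the logistic function. -/

import Mathlib

/-- The logistic (sigmoid) function `σ(x) = 1/(1 + e^{-x})`. -/
noncomputable def logistic (x : ℝ) : ℝ := 1 / (1 + Real.exp (-x))

/-- The derivative of the logistic function, `σ̇(x) = σ(x)(1 - σ(x))`. -/
noncomputable def logisticDeriv (x : ℝ) : ℝ := logistic x * (1 - logistic x)

/-! Subtracting the tangent line at `a` leaves a function whose derivative `σ̇ x - σ̇ a` is at most
`|b - a| / 4` between `a` and `b`, because `σ̇` is `1/4`-Lipschitz; the mean value inequality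
then bounds the remainder by `(b - a)² / 4`. -/

open scoped NNReal

theorem norm_image_sub_le_of_lipschitzWith_deriv {𝕜 G : Type*} [RCLike 𝕜] [NormedAddCommGroup G]
    [NormedSpace 𝕜 G] {f f' : 𝕜 → G} {K : ℝ≥0} (hf : ∀ x, HasDerivAt f (f' x) x)
    (hf' : LipschitzWith K f') (a b : 𝕜) :
    ‖f b - f a‖ ≤ ‖f' a‖ * ‖b - a‖ + K * ‖b - a‖ ^ 2 := by
  set g : 𝕜 → G := fun x ↦ f x - (x - a) • f' a
  have hg : ∀ x, HasDerivAt g (f' x - f' a) x := fun x ↦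
    ((hf x).sub (((hasDerivAt_id x).sub_const a).smul_const (f' a))).congr_deriv (by simp)
  have hg_bound : ∀ x ∈ Metric.closedBall a ‖b - a‖, ‖f' x - f' a‖ ≤ K * ‖b - a‖ :=
    fun x hx ↦ dist_eq_norm (f' x) (f' a) ▸ (hf'.dist_le_mul x a).trans (by gcongr; exact hx)
  have hg_diff : ‖g b - g a‖ ≤ K * ‖b - a‖ * ‖b - a‖ :=
    (convex_closedBall a _).norm_image_sub_le_of_norm_hasDerivWithin_le
      (fun x _ ↦ (hg x).hasDerivWithinAt) hg_bound (Metric.mem_closedBall_self (norm_nonneg _))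
      (by simp [dist_eq_norm])
  have hfg : f b - f a = (b - a) • f' a + (g b - g a) := by
    simp only [g, sub_self, zero_smul, sub_zero]; abel
  calc ‖f b - f a‖ ≤ ‖(b - a) • f' a‖ + ‖g b - g a‖ := hfg ▸ norm_add_le _ _
    _ ≤ ‖f' a‖ * ‖b - a‖ + K * ‖b - a‖ ^ 2 := by
      rw [norm_smul, mul_comm, sq, ← mul_assoc]; gcongr

theorem logistic_eq_sigmoid : logistic = Real.sigmoid := by
  ext x; simp [logistic, Real.sigmoid, one_div]

theorem logisticDeriv_eq_sigmoid (x : ℝ) :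
    logisticDeriv x = Real.sigmoid x * (1 - Real.sigmoid x) := by
  simp [logisticDeriv, logistic_eq_sigmoid]

theorem hasDerivAt_logistic (x : ℝ) : HasDerivAt logistic (logisticDeriv x) x :=
  logistic_eq_sigmoid ▸ logisticDeriv_eq_sigmoid x ▸ Real.hasDerivAt_sigmoid x

theorem logisticDeriv_nonneg (x : ℝ) : 0 ≤ logisticDeriv x :=
  logisticDeriv_eq_sigmoid x ▸
    mul_nonneg (Real.sigmoid_nonneg x) (sub_nonneg.2 (Real.sigmoid_le_one x))

theorem logisticDeriv_le_quarter (x : ℝ) : logisticDeriv x ≤ 1 / 4 := by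
  unfold logisticDeriv
  nlinarith [sq_nonneg (logistic x - 1 / 2)]

theorem lipschitzWith_logistic : LipschitzWith (1 / 4) logistic := by
  refine lipschitzWith_of_nnnorm_deriv_le (fun x ↦ (hasDerivAt_logistic x).differentiableAt)
    fun x ↦ ?_
  rw [(hasDerivAt_logistic x).deriv, ← NNReal.coe_le_coe, coe_nnnorm, Real.norm_eq_abs,
    abs_of_nonneg (logisticDeriv_nonneg x)]
  simpa using logisticDeriv_le_quarter x

theorem lipschitzWith_logisticDeriv : LipschitzWith (1 / 4) logisticDeriv := by
  refine LipschitzWith.of_dist_le_mul fun x y ↦ ?_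
  have h_factor : logisticDeriv x - logisticDeriv y
      = (logistic x - logistic y) * (1 - logistic x - logistic y) := by
    unfold logisticDeriv; ring
  have h_factor_le_one : |1 - logistic x - logistic y| ≤ 1 := by
    rw [logistic_eq_sigmoid, abs_le]
    constructor <;> linarith [Real.sigmoid_pos x, Real.sigmoid_pos y, Real.sigmoid_lt_one x,
      Real.sigmoid_lt_one y]
  rw [Real.dist_eq, h_factor, abs_mul]
  calc |logistic x - logistic y| * |1 - logistic x - logistic y|
      ≤ |logistic x - logistic y| := mul_le_of_le_one_right (abs_nonneg _) h_factor_le_one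
    _ ≤ _ := lipschitzWith_logistic.dist_le_mul x y

/-- Second-order self-concordance inequality for the logistic function:
for all real `a`, `b`, `|σ(b) − σ(a)| ≤ σ̇(a)·|b − a| + (1/4)·(b − a)²`. -/
theorem logistic_self_concordant (a b : ℝ) :
    |logistic b - logistic a| ≤ logisticDeriv a * |b - a| + (1 / 4) * (b - a) ^ 2 := by
  have h := norm_image_sub_le_of_lipschitzWith_deriv hasDerivAt_logistic
    lipschitzWith_logisticDeriv a b
  simpa [Real.norm_eq_abs, abs_of_nonneg (logisticDeriv_nonneg a), sq_abs] using h
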